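/- arXiv:2011.01648 — 3 statements merged into one kernel-verified Lean document; each statement's English description precedes it below -/
import Mathlib

section
/- Let ℐ be a finite set and let {P^{a,n}}_{(a,n)∈ℐ×ℤ} and {Q^{a,n}}_{(a,n)∈ℐ×ℤ} be two collections of polynomials in the variables {X^{b,m} : (b,m)∈ℐ×ℤ}, each having widening gap. Then for each (a,n), the sum Σ_{(b,m)∈ℐ×ℤ} P^{b,m} · (∂ Q^{a,n} / ∂ X^{b,m}) has only finitely many nonzero summands, and the resulting collection of polynomials indexed by (a,n) ∈ ℐ×ℤ again has widening gap. -/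
/-!
A summand `P^{b,m} ∂Q^{a,n}/∂X^{b,m}` can only be nonzero when `X^{b,m}` occurs in `Q^{a,n}`,
which for `n` outside a finite set forces `|m| < |n| - K`. The widening gap of `P` at `K = 1`
shows that, up to a constant `C`, no `P^{b,m}` involves variables farther out than `|m|`; so once
also `C < |n| - K`, every factor of every summand lives in the variables with `|m| < |n| - K`.
-/

open MvPolynomial

/-- A collection of polynomials `{P^{a,n}}` in `ℂ[X^{b,m}]_{(b,m)∈ℐ×ℤ}` has
'widening gap' if for every `K ≥ 1`, for all but finitely many `n ∈ ℤ`, each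
`P^{a,n}` lies in the subring generated by the variables `X^{b,m}` with
`|m| < |n| - K`. -/
def WideningGap {ι : Type*} (P : ι × ℤ → MvPolynomial (ι × ℤ) ℂ) : Prop :=
  ∀ K : ℤ, 1 ≤ K →
    {n : ℤ | ¬ ∀ a : ι,
      P (a, n) ∈ MvPolynomial.supported ℂ {bm : ι × ℤ | |bm.2| < |n| - K}}.Finite

namespace MvPolynomial

variable {R σ : Type*} [CommSemiring R]

theorem pderiv_mem_supported {s : Set σ} {f : MvPolynomial σ R} (i : σ)
    (hf : f ∈ supported R s) : pderiv i f ∈ supported R s := by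
  by_cases hi : i ∈ s
  · rw [supported_eq_range_rename] at hf ⊢
    obtain ⟨g, rfl⟩ := hf
    exact ⟨_, (pderiv_rename (R := R) (f := ((↑) : s → σ))
      Subtype.val_injective ⟨i, hi⟩ g).symm⟩
  · rw [pderiv_eq_zero_of_notMem_vars fun h => hi (mem_supported.1 hf h)]
    exact zero_mem _

theorem finite_setOf_mul_pderiv_ne_zero (P : σ → MvPolynomial σ R) (q : MvPolynomial σ R) :
    {i | P i * pderiv i q ≠ 0}.Finite :=
  q.vars.finite_toSet.subset fun _ hi =>
    by_contra fun hv => hi (by rw [pderiv_eq_zero_of_notMem_vars hv, mul_zero])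

theorem finsum_mul_pderiv_mem_supported {s : Set σ} {P : σ → MvPolynomial σ R}
    {q : MvPolynomial σ R} (hq : q ∈ supported R s) (hP : ∀ i ∈ s, P i ∈ supported R s) :
    ∑ᶠ i, P i * pderiv i q ∈ supported R s := by
  refine finsum_induction (· ∈ supported R s) (zero_mem _) (fun _ _ => add_mem) fun i => ?_
  by_cases hi : i ∈ s
  · exact mul_mem (hP i hi) (pderiv_mem_supported i hq)
  · rw [pderiv_eq_zero_of_notMem_vars fun h => hi (mem_supported.1 hq h), mul_zero]
    exact zero_mem _

end MvPolynomial

theorem WideningGap.exists_mem_supported_lt_max {ι : Type*} [Finite ι]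
    {P : ι × ℤ → MvPolynomial (ι × ℤ) ℂ} (hP : WideningGap P) :
    ∃ C : ℤ, ∀ bm : ι × ℤ, P bm ∈ supported ℂ {v : ι × ℤ | |v.2| < max |bm.2| C} := by
  set B := {n : ℤ | ¬ ∀ a : ι, P (a, n) ∈ supported ℂ {bm : ι × ℤ | |bm.2| < |n| - 1}}
  have hvars : (⋃ p ∈ P '' (Set.univ ×ˢ B), (p.vars : Set (ι × ℤ))).Finite :=
    ((Set.finite_univ.prod (hP 1 le_rfl)).image P).biUnion fun p _ => p.vars.finite_toSet
  obtain ⟨C, hC⟩ := (hvars.image fun v => |v.2|).bddAbove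
  refine ⟨C + 1, fun bm => ?_⟩
  by_cases hm : bm.2 ∈ B
  · refine mem_supported.2 fun v hv => ?_
    have : |v.2| ≤ C :=
      hC ⟨v, Set.mem_biUnion ⟨bm, ⟨Set.mem_univ _, hm⟩, rfl⟩ hv, rfl⟩
    exact this.trans_lt ((lt_add_one C).trans_le (le_max_right _ _))
  · refine supported_mono (fun v hv => ?_) (not_not.1 hm bm.1)
    exact lt_of_lt_of_le (b := |bm.2| - 1) hv
      ((sub_le_self _ zero_le_one).trans (le_max_left _ _))

/-- If `{P^{a,n}}` and `{Q^{a,n}}` have widening gap then for each `(a,n)` the sum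
`Σ_{(b,m)} P^{b,m} · ∂Q^{a,n}/∂X^{b,m}` has only finitely many nonzero summands,
and the resulting collection again has widening gap. -/
theorem stmt2 {ι : Type*} [Fintype ι]
    (P Q : ι × ℤ → MvPolynomial (ι × ℤ) ℂ)
    (hP : WideningGap P) (hQ : WideningGap Q) :
    (∀ an : ι × ℤ,
      {bm : ι × ℤ | P bm * MvPolynomial.pderiv bm (Q an) ≠ 0}.Finite) ∧
    WideningGap (fun an => ∑ᶠ bm : ι × ℤ, P bm * MvPolynomial.pderiv bm (Q an)) := by
  refine ⟨fun an => finite_setOf_mul_pderiv_ne_zero P (Q an), fun K hK => ?_⟩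
  obtain ⟨C, hC⟩ := hP.exists_mem_supported_lt_max
  refine ((hQ K hK).union (Set.finite_Icc (-(C + K)) (C + K))).subset fun n hn => ?_
  by_contra hgood
  obtain ⟨hQn, hnC⟩ := not_or.1 hgood
  have hCn : C < |n| - K := by
    have : ¬ |n| ≤ C + K := fun h => hnC (Set.mem_Icc.2 (abs_le.1 h))
    linarith
  refine hn fun a => finsum_mul_pderiv_mem_supported (not_not.1 hQn a) fun bm hbm => ?_
  exact supported_mono (fun v hv => lt_trans hv (max_lt hbm hCn)) (hC bm)
end

section
/- Let ℐ be a finite set, let N ≥ 1, and let {P_i^{a,n}}_{(a,n)∈ℐ×ℤ} for i = 1,…,N and {Q^{a,n}}_{(a,n)∈ℐ×ℤ} be collections of polynomials with widening gap. Then for each (a,n) the multiple sum Σ over (b₁,m₁),…,(b_N,m_N) ∈ ℐ×ℤ of P₁^{b₁,m₁}⋯P_N^{b_N,m_N} · ∂^N Q^{a,n} / (∂X^{b₁,m₁}⋯∂X^{b_N,m_N}) has only finitely many nonzero terms, and the resulting collection indexed by (a,n) has widening gap. -/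
open MvPolynomial

/-- The iterated partial derivative `∂^N q / (∂X^{b 0} ⋯ ∂X^{b (N-1)})`. -/
noncomputable def iterPDeriv {ι : Type*} {N : ℕ} (b : Fin N → ι × ℤ)
    (q : MvPolynomial (ι × ℤ) ℂ) : MvPolynomial (ι × ℤ) ℂ :=
  (List.ofFn b).foldr (fun v acc => MvPolynomial.pderiv v acc) q

/-!
Proof idea: a term of the sum vanishes unless every `(bᵢ, mᵢ)` is a variable of `Q^{a,n}`,
which gives finiteness. For the gap, applying the widening gap of `Pᵢ` at level `1` shows
that the variables of `Pᵢ^{b,m}` satisfy `|m'| ≤ |m| + C` for a constant `C` (the finitely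
many exceptional `m`, over the finitely many `b`, only enlarge `C`). So once `Q^{·,n}` only
involves variables with `|m| < |n| - K - C`, every nonzero term only involves variables with
`|m'| < |n| - K`.
-/

namespace MvPolynomial

variable {σ R : Type*} [CommSemiring R] {s : Set σ} {p : MvPolynomial σ R}

theorem pderiv_mem_supported_s3 (hp : p ∈ supported R s) (v : σ) :
    pderiv v p ∈ supported R s := by
  induction hp using Algebra.adjoin_induction with
  | mem x hx =>
    obtain ⟨i, -, rfl⟩ := hx
    rcases eq_or_ne i v with rfl | h
    · rw [pderiv_X_self]; exact one_mem _
    · rw [pderiv_X_of_ne h]; exact zero_mem _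
  | algebraMap r => rw [algebraMap_eq, pderiv_C]; exact zero_mem _
  | add x y _ _ hx hy => rw [map_add]; exact add_mem hx hy
  | mul x y hx' hy' hx hy => rw [pderiv_mul]; exact add_mem (mul_mem hx hy') (mul_mem hx' hy)

theorem foldr_pderiv_mem_supported (hp : p ∈ supported R s) (l : List σ) :
    l.foldr (fun v q => pderiv v q) p ∈ supported R s := by
  induction l with
  | nil => exact hp
  | cons v l ih => exact pderiv_mem_supported_s3 ih v

theorem foldr_pderiv_eq_zero_of_notMem_vars {v : σ} (hv : v ∉ p.vars) {l : List σ}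
    (hvl : v ∈ l) : l.foldr (fun v q => pderiv v q) p = 0 := by
  induction l with
  | nil => simp at hvl
  | cons w l ih =>
    rcases List.mem_cons.mp hvl with rfl | h
    · exact pderiv_eq_zero_of_notMem_vars fun hmem =>
        hv (mem_supported.mp (foldr_pderiv_mem_supported p.mem_supported_vars l) hmem)
    · simp only [List.foldr_cons, ih h, map_zero]

end MvPolynomial

section iterPDeriv

variable {ι : Type*} {N : ℕ} {q : MvPolynomial (ι × ℤ) ℂ}

theorem iterPDeriv_mem_supported {s : Set (ι × ℤ)} (hq : q ∈ supported ℂ s)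
    (b : Fin N → ι × ℤ) : iterPDeriv b q ∈ supported ℂ s :=
  foldr_pderiv_mem_supported hq _

theorem mem_vars_of_iterPDeriv_ne_zero {b : Fin N → ι × ℤ} (h : iterPDeriv b q ≠ 0)
    (i : Fin N) : b i ∈ q.vars := by
  by_contra hbi
  exact h (foldr_pderiv_eq_zero_of_notMem_vars hbi (List.mem_ofFn.mpr ⟨i, rfl⟩))

end iterPDeriv

theorem WideningGap.exists_vars_bound {ι : Type*} [Finite ι]
    {P : ι × ℤ → MvPolynomial (ι × ℤ) ℂ} (hP : WideningGap P) :
    ∃ C : ℤ, 0 ≤ C ∧ ∀ a m, ∀ v ∈ (P (a, m)).vars, |v.2| ≤ |m| + C := by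
  set E := {m : ℤ | ¬ ∀ a : ι, P (a, m) ∈ supported ℂ {v : ι × ℤ | |v.2| < |m| - 1}}
  have hT : (⋃ a : ι, ⋃ m ∈ E, ((P (a, m)).vars : Set (ι × ℤ))).Finite :=
    Set.finite_iUnion fun a => (hP 1 le_rfl).biUnion fun m _ => (P (a, m)).vars.finite_toSet
  obtain ⟨C, hC⟩ := (hT.image fun v => |v.2|).bddAbove
  refine ⟨max C 0, le_max_right _ _, fun a m v hv => ?_⟩
  by_cases hm : m ∈ E
  · have hvC : |v.2| ≤ C := hC ⟨v, Set.mem_iUnion₂.mpr ⟨a, m, Set.mem_iUnion.mpr ⟨hm, hv⟩⟩, rfl⟩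
    linarith [abs_nonneg m, le_max_left C 0]
  · have hvm : |v.2| < |m| - 1 := mem_supported.mp (not_not.mp hm a) hv
    linarith [le_max_right C 0]

theorem finite_support_prod_mul_iterPDeriv {ι : Type*} {N : ℕ}
    (P : Fin N → ι × ℤ → MvPolynomial (ι × ℤ) ℂ) (q : MvPolynomial (ι × ℤ) ℂ) :
    {b : Fin N → ι × ℤ | (∏ i, P i (b i)) * iterPDeriv b q ≠ 0}.Finite :=
  (Set.Finite.pi' fun _ => q.vars.finite_toSet).subset fun _ hb i =>
    mem_vars_of_iterPDeriv_ne_zero (right_ne_zero_of_mul hb) i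

theorem prod_mul_iterPDeriv_mem_supported {ι : Type*} {N : ℕ}
    {P : Fin N → ι × ℤ → MvPolynomial (ι × ℤ) ℂ} {q : MvPolynomial (ι × ℤ) ℂ} {C L : ℤ}
    (hC0 : 0 ≤ C) (hC : ∀ i a m, ∀ v ∈ (P i (a, m)).vars, |v.2| ≤ |m| + C)
    (hq : q ∈ supported ℂ {v : ι × ℤ | |v.2| < L - C}) (b : Fin N → ι × ℤ) :
    (∏ i, P i (b i)) * iterPDeriv b q ∈ supported ℂ {v : ι × ℤ | |v.2| < L} := by
  have hLC : {v : ι × ℤ | |v.2| < L - C} ⊆ {v | |v.2| < L} := fun v (hv : |v.2| < L - C) =>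
    show |v.2| < L by linarith
  by_cases h : iterPDeriv b q = 0
  · rw [h, mul_zero]; exact zero_mem _
  refine mul_mem (prod_mem fun i _ => mem_supported.mpr fun v hv => ?_)
    (supported_mono hLC (iterPDeriv_mem_supported hq b))
  have hb : |(b i).2| < L - C := mem_supported.mp hq (mem_vars_of_iterPDeriv_ne_zero h i)
  have hv : |v.2| ≤ |(b i).2| + C := hC i (b i).1 (b i).2 v hv
  show |v.2| < L
  linarith

theorem stmt3_general {ι : Type*} [Fintype ι] (N : ℕ)
    (P : Fin N → ι × ℤ → MvPolynomial (ι × ℤ) ℂ)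
    (Q : ι × ℤ → MvPolynomial (ι × ℤ) ℂ)
    (hP : ∀ i, WideningGap (P i)) (hQ : WideningGap Q) :
    (∀ an : ι × ℤ,
      {b : Fin N → ι × ℤ |
        (∏ i : Fin N, P i (b i)) * iterPDeriv b (Q an) ≠ 0}.Finite) ∧
    WideningGap (fun an =>
      ∑ᶠ b : Fin N → ι × ℤ, (∏ i : Fin N, P i (b i)) * iterPDeriv b (Q an)) := by
  refine ⟨fun an => finite_support_prod_mul_iterPDeriv P (Q an), fun K hK => ?_⟩
  choose C hC0 hC using fun i => (hP i).exists_vars_bound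
  have hC_le_sum : ∀ i, C i ≤ ∑ j, C j := fun i =>
    Finset.single_le_sum (fun j _ => hC0 j) (Finset.mem_univ i)
  have hsum0 : 0 ≤ ∑ j, C j := Finset.sum_nonneg fun j _ => hC0 j
  refine (hQ (K + ∑ j, C j) (by linarith)).subset fun n hn hQn => hn fun a => ?_
  dsimp only
  rw [finsum_eq_sum _ (finite_support_prod_mul_iterPDeriv P (Q (a, n)))]
  refine sum_mem fun b _ => prod_mul_iterPDeriv_mem_supported hsum0
    (fun i a m v hv => (hC i a m v hv).trans (by linarith [hC_le_sum i])) ?_ b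
  rw [sub_sub]
  exact hQn a

/-- If `{P_i^{a,n}}` (for `i = 1,…,N`) and `{Q^{a,n}}` have widening gap, then for
each `(a,n)` the multiple sum
`Σ_{(b₁,m₁),…,(b_N,m_N)} P₁^{b₁,m₁}⋯P_N^{b_N,m_N} · ∂^N Q^{a,n}/(∂X^{b₁,m₁}⋯∂X^{b_N,m_N})`
has only finitely many nonzero terms, and the resulting collection again has
widening gap. -/
theorem stmt3 {ι : Type*} [Fintype ι] (N : ℕ) (hN : 1 ≤ N)
    (P : Fin N → ι × ℤ → MvPolynomial (ι × ℤ) ℂ)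
    (Q : ι × ℤ → MvPolynomial (ι × ℤ) ℂ)
    (hP : ∀ i, WideningGap (P i)) (hQ : WideningGap Q) :
    (∀ an : ι × ℤ,
      {b : Fin N → ι × ℤ |
        (∏ i : Fin N, P i (b i)) * iterPDeriv b (Q an) ≠ 0}.Finite) ∧
    WideningGap (fun an =>
      ∑ᶠ b : Fin N → ι × ℤ, (∏ i : Fin N, P i (b i)) * iterPDeriv b (Q an)) :=
  stmt3_general N P Q hP hQ
end

section
/- Let (C•, d_C) and (D•, d_D) be cochain complexes of ℂ-vector spaces in non-negative degrees, let T_C: C• → C• and T_D: D• → D• be degree-0 linear maps commuting with the differentials and injective in all degrees ≥ 1, and let μ: C• → D• be a morphism of complexes that is a quasi-isomorphism and satisfies μ ∘ T_C = T_D ∘ μ. Let r ≥ 1 and let X ∈ C^r satisfy: (i) dX ∈ T_C(C^{r+1}), and (ii) μ(X) ∈ T_D(D^r). Then there exist B ∈ C^r and C' ∈ C^{r−1} such that X = T_C(B) + d(C'). -/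
/-!
A diagram chase that needs `μ` to be injective on `H^{r+1}` and bijective on `H^r`. Write
`dX = T Y` and `μ X = T h`. Injectivity of `T` gives `dY = 0` and `μ Y = dh`, so the class of `Y`
dies under `μ` and `Y = d B₀`. Then `h - μ B₀` is a cocycle, hence `μ B' + dw` for a cocycle `B'`;
now `X - T (B₀ + B')` is a cocycle whose image `T (dw) = d (T w)` is exact, so it is itself exact.
-/

open CategoryTheory

namespace CategoryTheory.ShortComplex

variable {R : Type*} [Ring R]

lemma exists_iCycles_eq (S : ShortComplex (ModuleCat R)) {x : S.X₂} (hx : S.g x = 0) :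
    ∃ c : S.cycles, S.iCycles c = x :=
  ⟨S.moduleCatCyclesIso.inv ⟨x, hx⟩, S.moduleCatCyclesIso_inv_iCycles_apply _⟩

lemma homologyπ_eq_zero_iff (S : ShortComplex (ModuleCat R)) (c : S.cycles) :
    S.homologyπ c = 0 ↔ ∃ a : S.X₁, S.toCycles a = c := by
  have hinj : Function.Injective S.moduleCatCyclesIso.hom :=
    (ModuleCat.mono_iff_injective _).1 inferInstance
  constructor
  · intro h
    have h2 : S.moduleCatLeftHomologyData.π (S.moduleCatCyclesIso.hom c) = 0 := by
      rw [← S.π_moduleCatCyclesIso_hom_apply, h, map_zero]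
    obtain ⟨a, ha⟩ := (Submodule.Quotient.mk_eq_zero _).1 h2
    exact ⟨a, hinj (by rw [← ModuleCat.comp_apply, S.toCycles_moduleCatCyclesIso_hom]; exact ha)⟩
  · rintro ⟨a, rfl⟩
    rw [← ModuleCat.comp_apply, S.toCycles_comp_homologyπ]
    rfl

variable {S T : ShortComplex (ModuleCat R)} (φ : S ⟶ T)

lemma exists_f_eq_of_injective_homologyMap (hφ : Function.Injective (homologyMap φ))
    {x : S.X₂} (hx : S.g x = 0) {w : T.X₁} (hw : φ.τ₂ x = T.f w) :
    ∃ a : S.X₁, S.f a = x := by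
  obtain ⟨c, rfl⟩ := S.exists_iCycles_eq hx
  have hiT : Function.Injective T.iCycles := (ModuleCat.mono_iff_injective _).1 inferInstance
  have hc : cyclesMap φ c = T.toCycles w := hiT <| by
    rw [← ModuleCat.comp_apply, cyclesMap_i, ← ModuleCat.comp_apply, T.toCycles_i,
      ModuleCat.comp_apply, hw]
  have hπ : S.homologyπ c = 0 := hφ <| by
    rw [map_zero, ← ModuleCat.comp_apply, homologyπ_naturality, ModuleCat.comp_apply, hc]
    exact (T.homologyπ_eq_zero_iff _).2 ⟨w, rfl⟩
  obtain ⟨a, rfl⟩ := (S.homologyπ_eq_zero_iff c).1 hπ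
  exact ⟨a, by rw [← ModuleCat.comp_apply, S.toCycles_i]⟩

lemma exists_eq_add_f_of_surjective_homologyMap (hφ : Function.Surjective (homologyMap φ))
    {y : T.X₂} (hy : T.g y = 0) :
    ∃ x : S.X₂, S.g x = 0 ∧ ∃ w : T.X₁, y = φ.τ₂ x + T.f w := by
  obtain ⟨d, rfl⟩ := T.exists_iCycles_eq hy
  obtain ⟨h, hh⟩ := hφ (T.homologyπ d)
  obtain ⟨c, rfl⟩ := (ModuleCat.epi_iff_surjective S.homologyπ).1 inferInstance h
  have hπ : T.homologyπ (d - cyclesMap φ c) = 0 := by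
    rw [map_sub, ← ModuleCat.comp_apply, ← homologyπ_naturality, ModuleCat.comp_apply, hh,
      sub_self]
  obtain ⟨w, hw⟩ := (T.homologyπ_eq_zero_iff _).1 hπ
  refine ⟨S.iCycles c, by rw [← ModuleCat.comp_apply, S.iCycles_g]; rfl, w, ?_⟩
  rw [← ModuleCat.comp_apply, ← cyclesMap_i, ← T.toCycles_i, ModuleCat.comp_apply,
    ModuleCat.comp_apply, hw, map_sub, add_sub_cancel]

end CategoryTheory.ShortComplex

namespace HomologicalComplex

variable {R : Type*} [Ring R] {ι : Type*} {c : ComplexShape ι}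
  {K L : HomologicalComplex (ModuleCat R) c}

lemma d_d_apply (K : HomologicalComplex (ModuleCat R) c) (i j k : ι) (x : K.X i) :
    K.d j k (K.d i j x) = 0 := by
  rw [← ModuleCat.comp_apply, K.d_comp_d]
  rfl

lemma Hom.comm_apply (f : K ⟶ L) (i j : ι) (x : K.X i) :
    L.d i j (f.f i x) = f.f j (K.d i j x) := by
  rw [← ModuleCat.comp_apply, f.comm, ModuleCat.comp_apply]

lemma Hom.f_apply_of_comp_eq {K' L' : HomologicalComplex (ModuleCat R) c} {f : K ⟶ L}
    {g : L ⟶ L'} {f' : K ⟶ K'} {g' : K' ⟶ L'} (h : f ≫ g = f' ≫ g') (i : ι) (x : K.X i) :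
    g.f i (f.f i x) = g'.f i (f'.f i x) := by
  rw [← ModuleCat.comp_apply, ← comp_f, h, comp_f, ModuleCat.comp_apply]

section QuasiIsoAt

variable (μ : K ⟶ L) {i j k : ι} (hij : c.prev j = i) (hjk : c.next j = k) [QuasiIsoAt μ j]
include hij hjk

lemma isIso_homologyMap_shortComplexFunctor'_map :
    IsIso (ShortComplex.homologyMap ((shortComplexFunctor' (ModuleCat R) c i j k).map μ)) :=
  (ShortComplex.quasiIso_iff _).1 ((quasiIsoAt_iff' μ i j k hij hjk).1 inferInstance)

lemma exists_d_eq_of_quasiIsoAt {x : K.X j} (hx : K.d j k x = 0) {w : L.X i}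
    (hw : μ.f j x = L.d i j w) : ∃ a : K.X i, K.d i j a = x := by
  have := isIso_homologyMap_shortComplexFunctor'_map μ hij hjk
  exact ShortComplex.exists_f_eq_of_injective_homologyMap
    ((shortComplexFunctor' (ModuleCat R) c i j k).map μ)
    ((ModuleCat.mono_iff_injective _).1 inferInstance) hx hw

lemma exists_eq_add_d_of_quasiIsoAt {y : L.X j} (hy : L.d j k y = 0) :
    ∃ x : K.X j, K.d j k x = 0 ∧ ∃ w : L.X i, y = μ.f j x + L.d i j w := by
  have := isIso_homologyMap_shortComplexFunctor'_map μ hij hjk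
  exact ShortComplex.exists_eq_add_f_of_surjective_homologyMap
    ((shortComplexFunctor' (ModuleCat R) c i j k).map μ)
    ((ModuleCat.epi_iff_surjective _).1 inferInstance) hy

end QuasiIsoAt

theorem exists_eq_add_d_of_comm_quasiIsoAt {TK : K ⟶ K} {TL : L ⟶ L} {μ : K ⟶ L}
    (hcomm : TK ≫ μ = μ ≫ TL) {i j k l : ι} (hij : c.prev j = i) (hjk : c.Rel j k)
    (hkl : c.Rel k l) [QuasiIsoAt μ j] [QuasiIsoAt μ k]
    (hTK : Function.Injective (TK.f l)) (hTL : Function.Injective (TL.f k)) {X : K.X j}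
    (hX : ∃ Y : K.X k, K.d j k X = TK.f k Y) (hμX : ∃ h : L.X j, μ.f j X = TL.f j h) :
    ∃ (B : K.X j) (a : K.X i), X = TK.f j B + K.d i j a := by
  obtain ⟨Y, hY⟩ := hX
  obtain ⟨h, hh⟩ := hμX
  have hdY : K.d k l Y = 0 := hTK <| by
    rw [← Hom.comm_apply, ← hY, d_d_apply, map_zero]
  have hμY : μ.f k Y = L.d j k h := hTL <| by
    rw [← Hom.f_apply_of_comp_eq hcomm, ← hY, ← Hom.comm_apply, hh, Hom.comm_apply]
  obtain ⟨B₀, hB₀⟩ :=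
    exists_d_eq_of_quasiIsoAt μ (c.prev_eq' hjk) (c.next_eq' hkl) hdY hμY
  have hdh : L.d j k (h - μ.f j B₀) = 0 := by
    rw [map_sub, Hom.comm_apply, hB₀, hμY, sub_self]
  obtain ⟨B', hdB', w, hw⟩ := exists_eq_add_d_of_quasiIsoAt μ hij (c.next_eq' hjk) hdh
  have hdZ : K.d j k (X - TK.f j (B₀ + B')) = 0 := by
    rw [map_sub, Hom.comm_apply, map_add, hB₀, hdB', add_zero, hY, sub_self]
  have hdw : L.d i j w = h - μ.f j (B₀ + B') := by
    rw [map_add, ← sub_sub, hw, add_sub_cancel_left]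
  have hμZ : μ.f j (X - TK.f j (B₀ + B')) = L.d i j (TL.f i w) := by
    rw [map_sub, hh, Hom.f_apply_of_comp_eq hcomm, ← map_sub, Hom.comm_apply, hdw]
  obtain ⟨a, ha⟩ := exists_d_eq_of_quasiIsoAt μ hij (c.next_eq' hjk) hdZ hμZ
  exact ⟨B₀ + B', a, by rw [ha, add_sub_cancel]⟩

end HomologicalComplex

theorem stmt13_general (C D : CochainComplex (ModuleCat ℂ) ℕ)
    (TC : C ⟶ C) (TD : D ⟶ D)
    (hTC : ∀ r : ℕ, 1 ≤ r → Function.Injective (TC.f r))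
    (hTD : ∀ r : ℕ, 1 ≤ r → Function.Injective (TD.f r))
    (μ : C ⟶ D) (hq : QuasiIso μ)
    (hcomm : TC ≫ μ = μ ≫ TD)
    (r : ℕ) (X : C.X r)
    (h1 : ∃ Y : C.X (r + 1), (C.d r (r + 1)) X = (TC.f (r + 1)) Y)
    (h2 : ∃ h : D.X r, (μ.f r) X = (TD.f r) h) :
    ∃ (B : C.X r) (C' : C.X (r - 1)),
      X = (TC.f r) B + (C.d (r - 1) r) C' := by
  -- at `r = 0` the differential `C.d (0 - 1) 0 = C.d 0 0` is zero, standing in for `C^{-1} = 0`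
  have hprev : (ComplexShape.up ℕ).prev r = r - 1 := by
    cases r <;> simp
  exact HomologicalComplex.exists_eq_add_d_of_comm_quasiIsoAt hcomm hprev rfl rfl
    (hTC (r + 2) (by omega)) (hTD (r + 1) (by omega)) h1 h2

/-- Diagram-chase lemma: let `C•`, `D•` be cochain complexes of ℂ-vector spaces
in non-negative degrees, `T_C`, `T_D` degree-0 chain maps that are injective in
all degrees `≥ 1`, and `μ : C• ⟶ D•` a quasi-isomorphism with
`μ ∘ T_C = T_D ∘ μ`.  If `r ≥ 1` and `X ∈ C^r` satisfies `dX ∈ im T_C` and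
`μ(X) ∈ im T_D`, then `X = T_C(B) + d(C')` for some `B ∈ C^r`, `C' ∈ C^{r-1}`. -/
theorem stmt13 (C D : CochainComplex (ModuleCat ℂ) ℕ)
    (TC : C ⟶ C) (TD : D ⟶ D)
    (hTC : ∀ r : ℕ, 1 ≤ r → Function.Injective (TC.f r))
    (hTD : ∀ r : ℕ, 1 ≤ r → Function.Injective (TD.f r))
    (μ : C ⟶ D) (hq : QuasiIso μ)
    (hcomm : TC ≫ μ = μ ≫ TD)
    (r : ℕ) (hr : 1 ≤ r) (X : C.X r)
    (h1 : ∃ Y : C.X (r + 1), (C.d r (r + 1)) X = (TC.f (r + 1)) Y)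
    (h2 : ∃ h : D.X r, (μ.f r) X = (TD.f r) h) :
    ∃ (B : C.X r) (C' : C.X (r - 1)),
      X = (TC.f r) B + (C.d (r - 1) r) C' :=
  stmt13_general C D TC TD hTC hTD μ hq hcomm r X h1 h2
end
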